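/- Let U₁, ..., U_m ∈ U(d) be unitary matrices whose column systems form m pairwise mutually unbiased orthonormal bases of ℂ^d, i.e., every entry of U_r* U_t has absolute value 1/√d for r ≠ t. Suppose h : U(d) → ℝ is a continuous positive definite function with h(Z) ≤ 0 whenever all entries of Z have absolute value 1/√d, and ∫_{U(d)} h dμ > 0 where μ is normalized Haar measure. Then m ≤ h(I) / ∫ h dμ. -/

import Mathlib

open MeasureTheory
open scoped ComplexOrder

/-- Positive definiteness of a real-valued function on a group. -/
def IsPosDefReal {G : Type*} [Group G] (h : G → ℝ) : Prop :=
  ∀ (m : ℕ) (u : Fin m → G) (c : Fin m → ℂ),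
    0 ≤ ∑ i, ∑ j, (starRingEnd ℂ) (c i) * c j * (h ((u i)⁻¹ * u j) : ℂ)

open Finset Filter Topology

/-!
For a positive definite `h` with Haar mean `I = ∫ h dμ`, the quadratic form
`Q(w, c) = ∑ c_i c_j h(w_i⁻¹ w_j)` is at least `(∑ c_i)² I`: append `k` Haar-random points with
weight `s = -(∑ c_i)/k`; the expected value of the enlarged (nonnegative) form is
`Q - (∑ c_i)² I + (∑ c_i)² (h 1 - I)/k`, and `k → ∞` gives the claim.
For the MUB configuration with `c = 1` the off-diagonal terms of `Q` are `≤ 0`, so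
`m² I ≤ Q ≤ m h(1)`.
-/

def groupQuadForm {G : Type*} [Group G] (h : G → ℝ) {n : ℕ} (w : Fin n → G) (c : Fin n → ℝ) :
    ℝ :=
  ∑ i, ∑ j, c i * c j * h ((w i)⁻¹ * w j)

section

variable {G : Type*} [Group G] {h : G → ℝ}

theorem groupQuadForm_snoc (hinv : ∀ g, h g⁻¹ = h g) {n : ℕ} (w : Fin n → G) (c : Fin n → ℝ)
    (x : G) (s : ℝ) :
    groupQuadForm h (Fin.snoc w x) (Fin.snoc c s) =
      groupQuadForm h w c + 2 * s * ∑ i, c i * h ((w i)⁻¹ * x) + s ^ 2 * h 1 := by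
  have hswap : ∀ i, h (x⁻¹ * w i) = h ((w i)⁻¹ * x) := fun i => by
    rw [← hinv, mul_inv_rev, inv_inv]
  simp only [groupQuadForm, Fin.sum_univ_castSucc, Fin.snoc_castSucc, Fin.snoc_last,
    inv_mul_cancel, hswap, sum_add_distrib]
  have hcross : ∀ i, c i * s * h ((w i)⁻¹ * x) = s * (c i * h ((w i)⁻¹ * x)) := fun i => by ring
  simp only [hcross, mul_assoc s, ← mul_sum]
  ring

theorem groupQuadForm_one_le_card_mul {m : ℕ} (U : Fin m → G)
    (hoff : ∀ i j, i ≠ j → h ((U i)⁻¹ * U j) ≤ 0) :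
    groupQuadForm h U 1 ≤ m * h 1 := by
  calc groupQuadForm h U 1 ≤ ∑ _i : Fin m, h 1 := by
        refine sum_le_sum fun i _ => ?_
        rw [← add_sum_erase _ _ (mem_univ i)]
        have hrest : ∑ j ∈ univ.erase i, 1 * 1 * h ((U i)⁻¹ * U j) ≤ 0 :=
          sum_nonpos fun j hj => by simpa using hoff i j (ne_of_mem_erase hj).symm
        simpa using hrest
    _ = m * h 1 := by simp

namespace IsPosDefReal

theorem groupQuadForm_nonneg (hpd : IsPosDefReal h) {n : ℕ} (w : Fin n → G) (c : Fin n → ℝ) :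
    0 ≤ groupQuadForm h w c := by
  have hreal : ∑ i, ∑ j, starRingEnd ℂ (c i : ℂ) * (c j : ℂ) * (h ((w i)⁻¹ * w j) : ℂ) =
      (groupQuadForm h w c : ℂ) := by
    simp only [groupQuadForm, Complex.conj_ofReal]
    push_cast
    rfl
  exact Complex.zero_le_real.mp (hreal ▸ hpd n w fun i => c i)

theorem map_one_nonneg (hpd : IsPosDefReal h) : 0 ≤ h 1 := by
  simpa [groupQuadForm] using hpd.groupQuadForm_nonneg (fun _ : Fin 1 => 1) 1

theorem map_inv (hpd : IsPosDefReal h) (g : G) : h g⁻¹ = h g := by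
  -- the form at `(1, g)` with coefficients `(1, i)` has imaginary part `h g - h g⁻¹`
  have him := (Complex.le_def.mp (hpd 2 ![1, g] ![1, Complex.I])).2
  simp [Fin.sum_univ_two, Complex.mul_im] at him
  linarith

end IsPosDefReal

variable [MeasurableSpace G] [MeasurableMul G] (μ : Measure G) [μ.IsMulLeftInvariant]

theorem integral_sum_mul_translate (hh : Integrable h μ) {n : ℕ} (w : Fin n → G)
    (c : Fin n → ℝ) :
    ∫ x, ∑ i, c i * h ((w i)⁻¹ * x) ∂μ = (∑ i, c i) * ∫ x, h x ∂μ := by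
  rw [integral_finsetSum _ fun i _ => (hh.comp_mul_left _).const_mul _, sum_mul]
  simp only [integral_const_mul, integral_mul_left_eq_self]

variable [IsProbabilityMeasure μ]

namespace IsPosDefReal

/-- The mean of the form after appending `k` independent `μ`-random points of weight `s`. -/
theorem groupQuadForm_add_mean_nonneg (hpd : IsPosDefReal h) (hh : Integrable h μ) (s : ℝ)
    (k : ℕ) {n : ℕ} (w : Fin n → G) (c : Fin n → ℝ) :
    0 ≤ groupQuadForm h w c + 2 * s * k * (∑ i, c i) * ∫ x, h x ∂μ + s ^ 2 * k * h 1
      + s ^ 2 * k * (k - 1) * ∫ x, h x ∂μ := by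
  induction k generalizing n with
  | zero => simpa using hpd.groupQuadForm_nonneg w c
  | succ k ih =>
    have hint : Integrable (fun x => 2 * s * ∑ i, c i * h ((w i)⁻¹ * x)) μ :=
      (integrable_finsetSum _ fun i _ => (hh.comp_mul_left _).const_mul _).const_mul _
    obtain ⟨x, hx⟩ := exists_le_integral hint
    rw [integral_const_mul, integral_sum_mul_translate μ hh] at hx
    have hnext := ih (Fin.snoc w x) (Fin.snoc c s)
    rw [groupQuadForm_snoc hpd.map_inv, Fin.sum_snoc] at hnext
    push_cast
    linarith

theorem sq_sum_mul_integral_le_groupQuadForm (hpd : IsPosDefReal h) (hh : Integrable h μ)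
    {n : ℕ} (w : Fin n → G) (c : Fin n → ℝ) :
    (∑ i, c i) ^ 2 * ∫ x, h x ∂μ ≤ groupQuadForm h w c := by
  set S := ∑ i, c i
  set I := ∫ x, h x ∂μ
  have hbound : ∀ k : ℕ, 0 < k → S ^ 2 * I - S ^ 2 * (h 1 - I) / k ≤ groupQuadForm h w c := by
    intro k hk
    have hmean := hpd.groupQuadForm_add_mean_nonneg μ hh (-S / k) k w c
    have hk : (k : ℝ) ≠ 0 := by positivity
    have hexpand :
        2 * (-S / k) * k * S * I + (-S / k) ^ 2 * k * h 1 + (-S / k) ^ 2 * k * (k - 1) * I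
          = -(S ^ 2 * I) + S ^ 2 * (h 1 - I) / k := by
      field_simp
      ring
    linarith
  have hlim : Tendsto (fun k : ℕ => S ^ 2 * I - S ^ 2 * (h 1 - I) / k) atTop (𝓝 (S ^ 2 * I)) := by
    simpa using tendsto_const_nhds.sub (tendsto_const_div_atTop_nhds_zero_nat (S ^ 2 * (h 1 - I)))
  exact le_of_tendsto hlim (eventually_atTop.2 ⟨1, hbound⟩)

end IsPosDefReal

end

theorem mub_witness_bound_general {d : ℕ}
    [CompactSpace (Matrix.unitaryGroup (Fin d) ℂ)]
    [MeasurableSpace (Matrix.unitaryGroup (Fin d) ℂ)]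
    [BorelSpace (Matrix.unitaryGroup (Fin d) ℂ)]
    (μ : Measure (Matrix.unitaryGroup (Fin d) ℂ)) [μ.IsHaarMeasure]
    [IsProbabilityMeasure μ]
    (h : Matrix.unitaryGroup (Fin d) ℂ → ℝ) (hcont : Continuous h)
    (hpd : IsPosDefReal h)
    (hneg : ∀ Z : Matrix.unitaryGroup (Fin d) ℂ,
      (∀ i j, ‖(Z : Matrix (Fin d) (Fin d) ℂ) i j‖ = 1 / Real.sqrt d) →
        h Z ≤ 0)
    (hint : 0 < ∫ Z, h Z ∂μ)
    (m : ℕ) (U : Fin m → Matrix.unitaryGroup (Fin d) ℂ)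
    (hmub : ∀ r t, r ≠ t → ∀ i j,
      ‖(star ((U r : Matrix (Fin d) (Fin d) ℂ)) *
        (U t : Matrix (Fin d) (Fin d) ℂ)) i j‖ = 1 / Real.sqrt d) :
    (m : ℝ) ≤ h 1 / ∫ Z, h Z ∂μ := by
  have hh : Integrable h μ := hcont.integrable_of_hasCompactSupport (.of_compactSpace h)
  have hoff : ∀ i j, i ≠ j → h ((U i)⁻¹ * U j) ≤ 0 := fun i j hij => hneg _ (hmub i j hij)
  have hlower := hpd.sq_sum_mul_integral_le_groupQuadForm μ hh U 1
  have hupper := groupQuadForm_one_le_card_mul U hoff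
  simp only [Pi.one_apply, sum_const, card_univ, Fintype.card_fin, nsmul_eq_mul, mul_one] at hlower
  rw [le_div_iff₀ hint]
  rcases m.eq_zero_or_pos with rfl | hm
  · simpa using hpd.map_one_nonneg
  · rw [sq, mul_assoc] at hlower
    exact le_of_mul_le_mul_left (hlower.trans hupper) (Nat.cast_pos.mpr hm)

/-- Let `U₁,…,U_m ∈ U(d)` form pairwise mutually unbiased bases, i.e. every entry
of `U_r* U_t` has absolute value `1/√d` for `r ≠ t`.  If `h : U(d) → ℝ` is a
continuous positive definite function with `h(Z) ≤ 0` whenever all entries of `Z`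
have absolute value `1/√d`, and `∫ h dμ > 0` for the normalized Haar measure `μ`,
then `m ≤ h(I) / ∫ h dμ`. -/
theorem mub_witness_bound {d : ℕ}
    [IsTopologicalGroup (Matrix.unitaryGroup (Fin d) ℂ)]
    [CompactSpace (Matrix.unitaryGroup (Fin d) ℂ)]
    [MeasurableSpace (Matrix.unitaryGroup (Fin d) ℂ)]
    [BorelSpace (Matrix.unitaryGroup (Fin d) ℂ)]
    (μ : Measure (Matrix.unitaryGroup (Fin d) ℂ)) [μ.IsHaarMeasure]
    [IsProbabilityMeasure μ]
    (h : Matrix.unitaryGroup (Fin d) ℂ → ℝ) (hcont : Continuous h)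
    (hpd : IsPosDefReal h)
    (hneg : ∀ Z : Matrix.unitaryGroup (Fin d) ℂ,
      (∀ i j, ‖(Z : Matrix (Fin d) (Fin d) ℂ) i j‖ = 1 / Real.sqrt d) →
        h Z ≤ 0)
    (hint : 0 < ∫ Z, h Z ∂μ)
    (m : ℕ) (U : Fin m → Matrix.unitaryGroup (Fin d) ℂ)
    (hmub : ∀ r t, r ≠ t → ∀ i j,
      ‖(star ((U r : Matrix (Fin d) (Fin d) ℂ)) *
        (U t : Matrix (Fin d) (Fin d) ℂ)) i j‖ = 1 / Real.sqrt d) :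
    (m : ℝ) ≤ h 1 / ∫ Z, h Z ∂μ :=
  mub_witness_bound_general μ h hcont hpd hneg hint m U hmub
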